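/- arXiv:1009.3102 — 2 statements merged into one kernel-verified Lean document; each statement's English description precedes it below -/
import Mathlib

section
/- Let p > 1, N ≥ 1, and let η, ξ ∈ ℝ^N satisfy |η−ξ| + |ξ| > 0. Then |Φ_p(η,ξ)| ≤ max{p−1, 2^{2−p}} (|η−ξ| + |ξ|)^{p−2} |η|. -/
/-!
Write `a = η - ξ`, `b = ξ`, so that `Φ_p = ‖a‖^(p-2) a + ‖b‖^(p-2) b` and `η = a + b`, and let
`K = C (‖a‖ + ‖b‖)^(p-2)` with `C = max (p-1) 2^(2-p)`. With the norms fixed, `K²‖η‖² - ‖Φ_p‖²`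
is affine in `⟪a, b⟫ ∈ [-‖a‖‖b‖, ‖a‖‖b‖]`, so it suffices to check the endpoints, where `a` and
`b` are parallel or antiparallel. These are the scalar inequalities
`s^(p-1) + t^(p-1) ≤ C (s+t)^(p-1)` and `|s^(p-1) - t^(p-1)| ≤ C (s+t)^(p-2) |s-t|`, proved
separately for `p ≥ 2` (superadditivity, convexity) and `p ≤ 2` (concavity, monotonicity of
`x^(p-2)`).
-/

open Real

noncomputable def Phi (p : ℝ) {N : ℕ} (η ξ : EuclideanSpace ℝ (Fin N)) :
    EuclideanSpace ℝ (Fin N) :=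
  (‖η - ξ‖ ^ (p - 2)) • (η - ξ) + (‖ξ‖ ^ (p - 2)) • ξ

lemma rpow_sub_two_mul_self {p x : ℝ} (hp : p ≠ 1) (hx : 0 ≤ x) :
    x ^ (p - 2) * x = x ^ (p - 1) := by
  rw [← rpow_add_one' hx (by contrapose! hp; linarith)]
  ring_nf

lemma rpow_add_rpow_le_of_le_one {q a b : ℝ} (hq₀ : 0 ≤ q) (hq₁ : q ≤ 1) (ha : 0 ≤ a)
    (hb : 0 ≤ b) : a ^ q + b ^ q ≤ 2 ^ (1 - q) * (a + b) ^ q := by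
  have hmid : 2⁻¹ * a ^ q + 2⁻¹ * b ^ q ≤ (2⁻¹ * a + 2⁻¹ * b) ^ q :=
    (concaveOn_rpow hq₀ hq₁).2 (Set.mem_Ici.2 ha) (Set.mem_Ici.2 hb) (by norm_num) (by norm_num)
      (by norm_num)
  rw [← mul_add, ← mul_add, mul_rpow (by norm_num) (by positivity), inv_rpow (by norm_num)]
    at hmid
  rw [rpow_sub two_pos, rpow_one]
  calc a ^ q + b ^ q = 2 * (2⁻¹ * (a ^ q + b ^ q)) := by ring
    _ ≤ 2 * ((2 ^ q)⁻¹ * (a + b) ^ q) := by gcongr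
    _ = 2 / 2 ^ q * (a + b) ^ q := by ring

lemma rpow_sub_one_add_rpow_sub_one_le {p a b : ℝ} (hp : 1 < p) (ha : 0 ≤ a) (hb : 0 ≤ b) :
    a ^ (p - 1) + b ^ (p - 1) ≤ max (p - 1) (2 ^ (2 - p)) * (a + b) ^ (p - 1) := by
  rcases le_total 2 p with h2 | h2
  · calc a ^ (p - 1) + b ^ (p - 1) ≤ (a + b) ^ (p - 1) :=
          add_rpow_le_rpow_add ha hb (by linarith)
      _ ≤ max (p - 1) (2 ^ (2 - p)) * (a + b) ^ (p - 1) :=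
          le_mul_of_one_le_left (by positivity) (le_max_of_le_left (by linarith))
  · calc a ^ (p - 1) + b ^ (p - 1) ≤ 2 ^ (1 - (p - 1)) * (a + b) ^ (p - 1) :=
          rpow_add_rpow_le_of_le_one (by linarith) (by linarith) ha hb
      _ = 2 ^ (2 - p) * (a + b) ^ (p - 1) := by ring_nf
      _ ≤ max (p - 1) (2 ^ (2 - p)) * (a + b) ^ (p - 1) := by gcongr; exact le_max_right _ _

lemma rpow_sub_rpow_le_of_one_le {q a b : ℝ} (hq : 1 ≤ q) (ha : 0 < a) (hb : 0 ≤ b) :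
    a ^ q - b ^ q ≤ q * a ^ (q - 1) * (a - b) := by
  -- Bernoulli's inequality for `(b / a) ^ q = (1 + (b / a - 1)) ^ q`
  have hbern := one_add_mul_self_le_rpow_one_add
    (by linarith [div_nonneg hb ha.le] : -1 ≤ b / a - 1) hq
  rw [add_sub_cancel, div_rpow hb ha.le, le_div_iff₀ (by positivity)] at hbern
  have hsplit : a ^ q = a ^ (q - 1) * a := by rw [← rpow_add_one ha.ne', sub_add_cancel]
  have hslope : (b / a - 1) * a ^ q = a ^ (q - 1) * (b - a) := by
    rw [hsplit]; field_simp
  linear_combination hbern - q * hslope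

lemma rpow_sub_rpow_le_of_le_one {q a b : ℝ} (hq : q ≤ 1) (ha : 0 < a) (hb : 0 ≤ b)
    (hba : b ≤ a) : a ^ q - b ^ q ≤ a ^ (q - 1) * (a - b) := by
  have hb' : a ^ (q - 1) * b ≤ b ^ q := by
    rcases hb.eq_or_lt with rfl | hb
    · simpa using rpow_nonneg le_rfl q
    · calc a ^ (q - 1) * b ≤ b ^ (q - 1) * b :=
            mul_le_mul_of_nonneg_right (rpow_le_rpow_of_nonpos hb hba (by linarith)) hb.le
        _ = b ^ q := by rw [← rpow_add_one hb.ne', sub_add_cancel]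
  have hsplit : a ^ q = a ^ (q - 1) * a := by rw [← rpow_add_one ha.ne', sub_add_cancel]
  linarith

lemma rpow_sub_one_sub_rpow_sub_one_le {p a b : ℝ} (hp : 1 < p) (hb : 0 ≤ b) (hba : b ≤ a) :
    a ^ (p - 1) - b ^ (p - 1) ≤ max (p - 1) (2 ^ (2 - p)) * (a + b) ^ (p - 2) * (a - b) := by
  rcases (hb.trans hba).eq_or_lt with rfl | ha
  · obtain rfl : b = 0 := le_antisymm hba hb
    simp
  have hab : 0 ≤ a - b := sub_nonneg.2 hba
  rw [show p - 2 = p - 1 - 1 by ring]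
  rcases le_total 2 p with h2 | h2
  · calc a ^ (p - 1) - b ^ (p - 1) ≤ (p - 1) * a ^ (p - 1 - 1) * (a - b) :=
          rpow_sub_rpow_le_of_one_le (by linarith : 1 ≤ p - 1) ha hb
      _ ≤ max (p - 1) (2 ^ (2 - p)) * (a + b) ^ (p - 1 - 1) * (a - b) := by
          gcongr
          · exact le_max_left _ _
          · linarith
          · linarith
  · calc a ^ (p - 1) - b ^ (p - 1) ≤ a ^ (p - 1 - 1) * (a - b) :=
          rpow_sub_rpow_le_of_le_one (by linarith) ha hb hba
      _ ≤ ((a + b) / 2) ^ (p - 1 - 1) * (a - b) :=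
          mul_le_mul_of_nonneg_right
            (rpow_le_rpow_of_nonpos (by positivity : 0 < (a + b) / 2) (by linarith) (by linarith))
            hab
      _ = 2 ^ (2 - p) * (a + b) ^ (p - 1 - 1) * (a - b) := by
          rw [div_rpow (by positivity) zero_le_two, div_eq_mul_inv, ← rpow_neg zero_le_two]
          ring_nf
      _ ≤ max (p - 1) (2 ^ (2 - p)) * (a + b) ^ (p - 1 - 1) * (a - b) := by
          gcongr; exact le_max_right _ _

lemma abs_rpow_sub_one_sub_rpow_sub_one_le {p a b : ℝ} (hp : 1 < p) (ha : 0 ≤ a)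
    (hb : 0 ≤ b) :
    |a ^ (p - 1) - b ^ (p - 1)| ≤ max (p - 1) (2 ^ (2 - p)) * (a + b) ^ (p - 2) * |a - b| := by
  wlog hba : b ≤ a generalizing a b
  · rw [abs_sub_comm, abs_sub_comm a, add_comm]
    exact this hb ha (le_of_not_ge hba)
  rw [abs_of_nonneg (sub_nonneg.2 (rpow_le_rpow hb hba (by linarith))),
    abs_of_nonneg (sub_nonneg.2 hba)]
  exact rpow_sub_one_sub_rpow_sub_one_le hp hb hba

lemma norm_smul_add_smul_le_of_abs_le {E : Type*} [NormedAddCommGroup E]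
    [InnerProductSpace ℝ E] {a b : E} {α β K : ℝ} (hK : 0 ≤ K)
    (hsame : |α * ‖a‖ + β * ‖b‖| ≤ K * (‖a‖ + ‖b‖))
    (hopp : |α * ‖a‖ - β * ‖b‖| ≤ K * |‖a‖ - ‖b‖|) :
    ‖α • a + β • b‖ ≤ K * ‖a + b‖ := by
  have hsame' := sq_le_sq' (abs_le.1 hsame).1 (abs_le.1 hsame).2
  have hopp' := sq_le_sq' (abs_le.1 hopp).1 (abs_le.1 hopp).2
  rw [mul_pow, sq_abs] at hopp'
  have hinner := abs_le.1 (abs_real_inner_le_norm a b)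
  have hlhs : ‖α • a + β • b‖ ^ 2 =
      α ^ 2 * ‖a‖ ^ 2 + 2 * (α * β) * inner ℝ a b + β ^ 2 * ‖b‖ ^ 2 := by
    rw [norm_add_sq_real, norm_smul, norm_smul, real_inner_smul_left, real_inner_smul_right,
      mul_pow, mul_pow, Real.norm_eq_abs, Real.norm_eq_abs, sq_abs, sq_abs]
    ring
  have hrhs : (K * ‖a + b‖) ^ 2 = K ^ 2 * (‖a‖ ^ 2 + 2 * inner ℝ a b + ‖b‖ ^ 2) := by
    rw [mul_pow, norm_add_sq_real]
  refine le_of_pow_le_pow_left₀ two_ne_zero (by positivity) ?_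
  rw [hlhs, hrhs]
  rcases le_total (α * β) (K ^ 2) with hαβ | hαβ
  · nlinarith [mul_nonneg (sub_nonneg.2 hαβ) (neg_le_iff_add_nonneg.1 hinner.1)]
  · nlinarith [mul_nonneg (sub_nonneg.2 hαβ) (sub_nonneg.2 hinner.2)]

theorem phi_norm_upper_bound_general (p : ℝ) (hp : 1 < p) (N : ℕ)
    (η ξ : EuclideanSpace ℝ (Fin N)) :
    ‖Phi p η ξ‖ ≤ max (p - 1) (2 ^ (2 - p)) * (‖η - ξ‖ + ‖ξ‖) ^ (p - 2) * ‖η‖ := by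
  set C := max (p - 1) (2 ^ (2 - p))
  have hA := norm_nonneg (η - ξ)
  have hB := norm_nonneg ξ
  have hsame : |‖η - ξ‖ ^ (p - 2) * ‖η - ξ‖ + ‖ξ‖ ^ (p - 2) * ‖ξ‖| ≤
      C * (‖η - ξ‖ + ‖ξ‖) ^ (p - 2) * (‖η - ξ‖ + ‖ξ‖) := by
    rw [rpow_sub_two_mul_self hp.ne' hA, rpow_sub_two_mul_self hp.ne' hB, mul_assoc,
      rpow_sub_two_mul_self hp.ne' (add_nonneg hA hB), abs_of_nonneg (by positivity)]
    exact rpow_sub_one_add_rpow_sub_one_le hp hA hB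
  have hopp : |‖η - ξ‖ ^ (p - 2) * ‖η - ξ‖ - ‖ξ‖ ^ (p - 2) * ‖ξ‖| ≤
      C * (‖η - ξ‖ + ‖ξ‖) ^ (p - 2) * |‖η - ξ‖ - ‖ξ‖| := by
    rw [rpow_sub_two_mul_self hp.ne' hA, rpow_sub_two_mul_self hp.ne' hB]
    exact abs_rpow_sub_one_sub_rpow_sub_one_le hp hA hB
  simpa only [Phi, sub_add_cancel] using
    norm_smul_add_smul_le_of_abs_le (by positivity) hsame hopp

/-- Lemma 3.1, inequality (3.2): for `p > 1` and `|η−ξ| + |ξ| > 0`,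
`|Φ_p(η,ξ)| ≤ max{p−1, 2^{2−p}} (|η−ξ| + |ξ|)^{p−2} |η|`. -/
theorem phi_norm_upper_bound (p : ℝ) (hp : 1 < p) (N : ℕ) (hN : 1 ≤ N)
    (η ξ : EuclideanSpace ℝ (Fin N)) (h : 0 < ‖η - ξ‖ + ‖ξ‖) :
    ‖Phi p η ξ‖ ≤ max (p - 1) (2 ^ (2 - p)) * (‖η - ξ‖ + ‖ξ‖) ^ (p - 2) * ‖η‖ :=
  phi_norm_upper_bound_general p hp N η ξ
end

section
/- Let p > 1 and let η, ξ ∈ ℝ be real numbers. Then (|η − ξ|^{p−2}(η − ξ) + |ξ|^{p−2}ξ) = (p−1) η ∫₀¹ |tη − ξ|^{p−2} dt, where for 1 < p < 2 the integrand is extended by 0 at any t with tη = ξ (the integral is finite since p − 2 > −1). -/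
/-!
Away from `0` the map `x ↦ |x| ^ r * x` has derivative `(r + 1) * |x| ^ r`, and for `-1 < r` it
is continuous at `0` while `|x| ^ r` is integrable there. The fundamental theorem of calculus
with one exceptional point then computes `∫ x in a..b, |x| ^ r`, and the substitution
`x = t * η - ξ` turns this into the identity with `r = p - 2`.
-/

open MeasureTheory Set Real

theorem hasDerivAt_abs_rpow_mul_self (r : ℝ) {x : ℝ} (hx : x ≠ 0) :
    HasDerivAt (fun x : ℝ => |x| ^ r * x) ((r + 1) * |x| ^ r) x := by
  have habs : HasDerivAt (fun x : ℝ => |x| ^ r) (SignType.sign x * r * |x| ^ (r - 1)) x :=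
    (hasDerivAt_abs hx).rpow_const (Or.inl (abs_ne_zero.2 hx))
  refine (habs.mul (hasDerivAt_id' x)).congr_deriv ?_
  rw [rpow_sub_one (abs_ne_zero.2 hx)]
  field_simp
  rw [mul_comm _ x, ← mul_assoc, self_mul_sign]
  ring

theorem norm_abs_rpow_mul_self {r : ℝ} (hr : -1 < r) (x : ℝ) :
    ‖|x| ^ r * x‖ = |x| ^ (r + 1) := by
  rw [rpow_add_one' (abs_nonneg x) (by linarith), norm_mul, norm_of_nonneg (by positivity),
    norm_eq_abs]

theorem continuous_abs_rpow_mul_self {r : ℝ} (hr : -1 < r) :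
    Continuous (fun x : ℝ => |x| ^ r * x) := by
  refine continuous_iff_continuousAt.2 fun x => ?_
  rcases eq_or_ne x 0 with rfl | hx
  · have hpow : Continuous (fun x : ℝ => |x| ^ (r + 1)) :=
      continuous_abs.rpow_const fun _ => Or.inr (by linarith)
    rw [ContinuousAt, mul_zero, tendsto_zero_iff_norm_tendsto_zero]
    simp only [norm_abs_rpow_mul_self hr]
    simpa [zero_rpow (by linarith : r + 1 ≠ 0)] using hpow.tendsto 0
  · exact (hasDerivAt_abs_rpow_mul_self r hx).continuousAt

theorem intervalIntegrable_abs_rpow {r : ℝ} (hr : -1 < r) (a b : ℝ) :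
    IntervalIntegrable (fun x : ℝ => |x| ^ r) volume a b := by
  have hr' : r + 1 ≠ 0 := by linarith
  -- A nonnegative derivative is integrable; on `[[0, c]]` the singular point `0` is an endpoint.
  have from_zero : ∀ c, IntervalIntegrable (fun x : ℝ => (r + 1) * |x| ^ r) volume 0 c := by
    intro c
    refine intervalIntegral.intervalIntegrable_deriv_of_nonneg
      (continuous_abs_rpow_mul_self hr).continuousOn
      (fun x hx => hasDerivAt_abs_rpow_mul_self r ?_)
      (fun x _ => mul_nonneg (by linarith) (by positivity))
    rintro rfl
    simp only [mem_Ioo, min_lt_iff, lt_max_iff, lt_self_iff_false, false_or] at hx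
    linarith
  simpa [hr'] using ((from_zero a).symm.trans (from_zero b)).const_mul (r + 1)⁻¹

theorem integral_abs_rpow {r : ℝ} (hr : -1 < r) (a b : ℝ) :
    ∫ x in a..b, |x| ^ r = (|b| ^ r * b - |a| ^ r * a) / (r + 1) := by
  have hr' : r + 1 ≠ 0 := by linarith
  refine integral_eq_of_hasDerivAt_off_countable (fun x => |x| ^ r * x / (r + 1)) _
    (countable_singleton 0) ((continuous_abs_rpow_mul_self hr).div_const _).continuousOn
    (fun x hx => ?_) (intervalIntegrable_abs_rpow hr a b) |>.trans (sub_div ..).symm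
  simpa [hr'] using (hasDerivAt_abs_rpow_mul_self r hx.2).div_const (r + 1)

/-- The one-dimensional exact mean value identity for the translated p-Laplacian
nonlinearity: for real numbers `η, ξ`,
`|η−ξ|^{p−2}(η−ξ) + |ξ|^{p−2}ξ = (p−1) η ∫₀¹ |tη − ξ|^{p−2} dt`
(for `1 < p < 2` the integrand is extended by `0` at any `t` with `tη = ξ`). -/
theorem scalar_phi_mean_value_identity (p : ℝ) (hp : 1 < p) (η ξ : ℝ) :
    |η - ξ| ^ (p - 2) * (η - ξ) + |ξ| ^ (p - 2) * ξ
      = (p - 1) * η * ∫ t in (0 : ℝ)..1, |t * η - ξ| ^ (p - 2) := by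
  rcases eq_or_ne η 0 with rfl | hη
  · simp
  have substitution : ∫ t in (0 : ℝ)..1, |t * η - ξ| ^ (p - 2)
      = η⁻¹ * ∫ x in -ξ..η - ξ, |x| ^ (p - 2) := by
    simp_rw [mul_comm _ η]
    simp [intervalIntegral.integral_comp_mul_sub (fun x => |x| ^ (p - 2)) hη]
  have hp' : p - 2 + 1 ≠ 0 := by linarith
  rw [substitution, integral_abs_rpow (by linarith), abs_neg]
  field_simp
  ring
end
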